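/- arXiv:1908.01239 — 2 statements merged into one kernel-verified Lean document; each statement's English description precedes it below -/
import Mathlib

section
/- Let X, U, W, Y be normed spaces. Suppose S : X → U and S' : X → L(X,U) satisfy: for every θ, θ̃ in a ball B_ρ(θ⁰) ⊆ X there exists r = r(θ,θ̃) ∈ W with ‖S(θ) - S(θ̃) - S'(θ)(θ - θ̃)‖_Y ≤ C_lin ‖r‖_W (bounded invertibility of the linearization) and ‖r‖_W ≤ c_AAO ‖C(S(θ)) - C(S(θ̃))‖_Y (all-at-once tangential cone condition), where C : U → Y is a bounded linear operator and we write ‖·‖_Y for the norm after applying C where appropriate. Then the reduced forward operator F = C ∘ S satisfies the tangential cone condition ‖F(θ) - F(θ̃) - F'(θ)(θ - θ̃)‖_Y ≤ C_lin · c_AAO · ‖F(θ) - F(θ̃)‖_Y on B_ρ(θ⁰), with F'(θ) = C ∘ S'(θ). -/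
open Metric

theorem stmt1_general {X U W Y : Type*} [NormedAddCommGroup X] [NormedSpace ℝ X]
    [NormedAddCommGroup U] [NormedSpace ℝ U]
    [NormedAddCommGroup W] [NormedSpace ℝ W]
    [NormedAddCommGroup Y] [NormedSpace ℝ Y]
    (C : U →L[ℝ] Y) (S : X → U) (S' : X → X →L[ℝ] U)
    (θ0 : X) (ρ Clin cAAO : ℝ) (hClin : 0 ≤ Clin)
    (h : ∀ θ ∈ closedBall θ0 ρ, ∀ θ' ∈ closedBall θ0 ρ, ∃ r : W,
      ‖C (S θ) - C (S θ') - C (S' θ (θ - θ'))‖ ≤ Clin * ‖r‖ ∧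
      ‖r‖ ≤ cAAO * ‖C (S θ) - C (S θ')‖) :
    ∀ θ ∈ closedBall θ0 ρ, ∀ θ' ∈ closedBall θ0 ρ,
      ‖C (S θ) - C (S θ') - C (S' θ (θ - θ'))‖ ≤
        Clin * cAAO * ‖C (S θ) - C (S θ')‖ := by
  intro θ hθ θ' hθ'
  obtain ⟨r, hlin, hAAO⟩ := h θ hθ θ' hθ'
  calc ‖C (S θ) - C (S θ') - C (S' θ (θ - θ'))‖ ≤ Clin * ‖r‖ := hlin
    _ ≤ Clin * (cAAO * ‖C (S θ) - C (S θ')‖) := by gcongr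
    _ = Clin * cAAO * ‖C (S θ) - C (S θ')‖ := (mul_assoc _ _ _).symm

/-- Reduced tangential cone condition follows from the all-at-once one together with
stability of the linearized problem: `F = C ∘ S`, `F'(θ) = C ∘ S'(θ)`. -/
theorem stmt1 {X U W Y : Type*} [NormedAddCommGroup X] [NormedSpace ℝ X]
    [NormedAddCommGroup U] [NormedSpace ℝ U]
    [NormedAddCommGroup W] [NormedSpace ℝ W]
    [NormedAddCommGroup Y] [NormedSpace ℝ Y]
    (C : U →L[ℝ] Y) (S : X → U) (S' : X → X →L[ℝ] U)
    (θ0 : X) (ρ Clin cAAO : ℝ) (hρ : 0 < ρ) (hClin : 0 ≤ Clin) (hcAAO : 0 ≤ cAAO)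
    (h : ∀ θ ∈ closedBall θ0 ρ, ∀ θ' ∈ closedBall θ0 ρ, ∃ r : W,
      ‖C (S θ) - C (S θ') - C (S' θ (θ - θ'))‖ ≤ Clin * ‖r‖ ∧
      ‖r‖ ≤ cAAO * ‖C (S θ) - C (S θ')‖) :
    ∀ θ ∈ closedBall θ0 ρ, ∀ θ' ∈ closedBall θ0 ρ,
      ‖C (S θ) - C (S θ') - C (S' θ (θ - θ'))‖ ≤
        Clin * cAAO * ‖C (S θ) - C (S θ')‖ :=
  stmt1_general C S S' θ0 ρ Clin cAAO hClin h
end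

section
/- Let X, Y, W be normed spaces and B : X → L(V, W*) linear in its first argument with ‖B(θ)v‖_{W*} ≤ c ‖C v‖_Y for all θ in the unit ball of X and all v ∈ V, where C ∈ L(V,Y). Then the bilinear forward map f(θ,u) = L u + B(θ) u − g (with L ∈ L(V,W*), g ∈ W*) satisfies the exact identity f(θ,u) − f(θ̃,ũ) − f'_u(θ,u)(u−ũ) − f'_θ(θ,u)(θ−θ̃) = −B(θ−θ̃)(u−ũ), where f'_u(θ,u) = L + B(θ) and f'_θ(θ,u)χ = B(χ)u; consequently the all-at-once tangential cone estimate ‖f(θ,u) − f(θ̃,ũ) − f'_u(θ,u)(u−ũ) − f'_θ(θ,u)(θ−θ̃)‖_{W*} ≤ c ‖θ−θ̃‖_X ‖C(u−ũ)‖_Y holds. -/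
section BilinearRemainder

variable {𝕜 X V W : Type*} [NontriviallyNormedField 𝕜]
  [NormedAddCommGroup X] [NormedSpace 𝕜 X] [NormedAddCommGroup V] [NormedSpace 𝕜 V]
  [NormedAddCommGroup W] [NormedSpace 𝕜 W]

theorem ContinuousLinearMap.affine_bilinear_linearization_remainder
    (L : V →L[𝕜] W) (g : W) (B : X →L[𝕜] V →L[𝕜] W) (θ θt : X) (u ut : V) :
    (L u + B θ u - g) - (L ut + B θt ut - g) - (L (u - ut) + B θ (u - ut)) - B (θ - θt) u =
      -(B (θ - θt) (u - ut)) := by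
  simp only [map_sub, _root_.sub_apply]
  abel

end BilinearRemainder

theorem stmt15_general {X V Wd Y : Type*} [NormedAddCommGroup X] [NormedSpace ℝ X]
    [NormedAddCommGroup V] [NormedSpace ℝ V]
    [NormedAddCommGroup Wd] [NormedSpace ℝ Wd]
    [NormedAddCommGroup Y] [NormedSpace ℝ Y]
    (L : V →L[ℝ] Wd) (g : Wd) (B : X →L[ℝ] V →L[ℝ] Wd) (C : V →L[ℝ] Y)
    (c : ℝ)
    (hB : ∀ (χ : X) (v : V), ‖B χ v‖ ≤ c * ‖χ‖ * ‖C v‖) :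
    ∀ (θ θt : X) (u ut : V),
      ((L u + B θ u - g) - (L ut + B θt ut - g) -
          (L (u - ut) + B θ (u - ut)) - B (θ - θt) u = -(B (θ - θt) (u - ut))) ∧
      ‖(L u + B θ u - g) - (L ut + B θt ut - g) -
          (L (u - ut) + B θ (u - ut)) - B (θ - θt) u‖ ≤
        c * ‖θ - θt‖ * ‖C (u - ut)‖ := by
  intro θ θt u ut
  have remainder := L.affine_bilinear_linearization_remainder g B θ θt u ut
  refine ⟨remainder, ?_⟩
  rw [remainder, norm_neg]
  exact hB _ _

/-- For bilinear problems `f(θ,u) = L u + B(θ) u − g`, the linearization remainder is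
exactly `−B(θ−θ̃)(u−ũ)`, so the all-at-once tangential cone estimate holds with
constant `c` whenever `‖B(χ)v‖ ≤ c ‖χ‖ ‖C v‖`. -/
theorem stmt15 {X V Wd Y : Type*} [NormedAddCommGroup X] [NormedSpace ℝ X]
    [NormedAddCommGroup V] [NormedSpace ℝ V]
    [NormedAddCommGroup Wd] [NormedSpace ℝ Wd]
    [NormedAddCommGroup Y] [NormedSpace ℝ Y]
    (L : V →L[ℝ] Wd) (g : Wd) (B : X →L[ℝ] V →L[ℝ] Wd) (C : V →L[ℝ] Y)
    (c : ℝ) (hc : 0 ≤ c)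
    (hB : ∀ (χ : X) (v : V), ‖B χ v‖ ≤ c * ‖χ‖ * ‖C v‖) :
    ∀ (θ θt : X) (u ut : V),
      ((L u + B θ u - g) - (L ut + B θt ut - g) -
          (L (u - ut) + B θ (u - ut)) - B (θ - θt) u = -(B (θ - θt) (u - ut))) ∧
      ‖(L u + B θ u - g) - (L ut + B θt ut - g) -
          (L (u - ut) + B θ (u - ut)) - B (θ - θt) u‖ ≤
        c * ‖θ - θt‖ * ‖C (u - ut)‖ :=
  stmt15_general L g B C c hB
end
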